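/- arXiv:quant-ph/0108059 — 4 statements merged into one kernel-verified Lean document; each statement's English description precedes it below -/
import Mathlib

section
/- Let μ be a finite Borel measure on ℝⁿ with ∫ e^{a‖x‖} dμ(x) < ∞ for some a > 0, and let f ∈ L^q(ℝⁿ, μ) with 1 < q < ∞ and 1/p + 1/q = 1. Then for every z = (z₁,…,zₙ) ∈ ℂⁿ with |Im zⱼ| < a/(2√n p) for all j, the integral ∫ |exp(-i ∑ⱼ zⱼ xⱼ) f(x)| e^{(a/(2p))‖x‖} dμ(x) is finite. -/
/-! Since `‖exp (-I * ∑ zⱼ xⱼ)‖ = exp (∑ (Im zⱼ) xⱼ)`, Cauchy–Schwarz and the bound on `Im z`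
give `‖exp (-I * ∑ zⱼ xⱼ)‖ ≤ exp ((a / 2p) ‖x‖)`, so the integrand is dominated by
`exp ((a / p) ‖x‖) |f x|`. The weight `exp ((a / p) ‖x‖)` lies in `Lᵖ(μ)` because its `p`-th power
is the integrable `exp (a ‖x‖)`, and Hölder's inequality pairs it with `f ∈ L^q(μ)`. -/

open MeasureTheory Complex

lemma EuclideanSpace.norm_le_sqrt_card_mul {𝕜 ι : Type*} [RCLike 𝕜] [Fintype ι]
    {b : EuclideanSpace 𝕜 ι} {B : ℝ} (hB : 0 ≤ B) (hb : ∀ j, ‖b j‖ ≤ B) :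
    ‖b‖ ≤ √(Fintype.card ι) * B := by
  rw [EuclideanSpace.norm_eq, ← Real.sqrt_sq hB, ← Real.sqrt_mul (Nat.cast_nonneg _)]
  gcongr
  calc ∑ j, ‖b j‖ ^ 2 ≤ ∑ _ : ι, B ^ 2 := by gcongr with j; exact hb j
    _ = _ := by simp

lemma sum_mul_le_sqrt_card_mul_norm {ι : Type*} [Fintype ι] {b : ι → ℝ} {B : ℝ} (hB : 0 ≤ B)
    (hb : ∀ j, |b j| ≤ B) (x : EuclideanSpace ℝ ι) :
    ∑ j, b j * x j ≤ √(Fintype.card ι) * B * ‖x‖ :=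
  calc ∑ j, b j * x j = inner ℝ (WithLp.toLp 2 b) x := by
        simp [PiLp.inner_apply, mul_comm]
    _ ≤ ‖WithLp.toLp 2 b‖ * ‖x‖ := real_inner_le_norm _ _
    _ ≤ √(Fintype.card ι) * B * ‖x‖ := by
        gcongr; exact EuclideanSpace.norm_le_sqrt_card_mul hB hb

lemma norm_cexp_neg_I_mul_sum {ι : Type*} [Fintype ι] (z : ι → ℂ) (x : ι → ℝ) :
    ‖cexp (-I * ∑ j, z j * x j)‖ = Real.exp (∑ j, (z j).im * x j) := by
  simp [norm_exp, mul_re, im_sum]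

lemma norm_cexp_neg_I_mul_sum_le {ι : Type*} [Fintype ι] {z : ι → ℂ} {c : ℝ} (hc : 0 ≤ c)
    (hz : ∀ j, |(z j).im| ≤ c / √(Fintype.card ι)) (x : EuclideanSpace ℝ ι) :
    ‖cexp (-I * ∑ j, z j * x j)‖ ≤ Real.exp (c * ‖x‖) := by
  rw [norm_cexp_neg_I_mul_sum, Real.exp_le_exp]
  have hcard : √(Fintype.card ι) * (c / √(Fintype.card ι)) ≤ c := by
    rcases (Real.sqrt_nonneg (Fintype.card ι)).eq_or_lt with h | h
    · simpa [← h]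
    · rw [mul_div_cancel₀ _ h.ne']
  calc ∑ j, (z j).im * x j ≤ √(Fintype.card ι) * (c / √(Fintype.card ι)) * ‖x‖ :=
        sum_mul_le_sqrt_card_mul_norm (by positivity) hz x
    _ ≤ c * ‖x‖ := by gcongr

lemma memLp_exp_div_of_integrable_exp {α : Type*} [MeasurableSpace α] {μ : Measure α}
    {g : α → ℝ} (hg : AEStronglyMeasurable g μ) {p : ℝ} (hp : 0 < p)
    (h : Integrable (fun x => Real.exp (g x)) μ) :
    MemLp (fun x => Real.exp (g x / p)) (ENNReal.ofReal p) μ := by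
  rw [← integrable_norm_rpow_iff (by fun_prop) (by simpa using hp) ENNReal.ofReal_ne_top]
  convert h using 2 with x
  rw [ENNReal.toReal_ofReal hp.le, Real.norm_of_nonneg (Real.exp_pos _).le, ← Real.exp_mul,
    div_mul_cancel₀ _ hp.ne']

theorem integrable_exp_mul_of_small_imaginary_part_general
    (n : ℕ) (μ : Measure (EuclideanSpace ℝ (Fin n)))
    (a : ℝ) (ha : 0 < a)
    (hexp : Integrable (fun x => Real.exp (a * ‖x‖)) μ)
    (p q : ℝ) (hpq : p.HolderConjugate q)
    (f : EuclideanSpace ℝ (Fin n) → ℝ) (hf : MemLp f (ENNReal.ofReal q) μ)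
    (z : Fin n → ℂ) (hz : ∀ j, |(z j).im| < a / (2 * Real.sqrt n * p)) :
    Integrable
      (fun x => ‖Complex.exp (-I * ∑ j, z j * (x j : ℂ)) * (f x : ℂ)‖ *
        Real.exp (a / (2 * p) * ‖x‖)) μ := by
  have hp := hpq.pos
  have : (ENNReal.ofReal p).HolderConjugate (ENNReal.ofReal q) := hpq.ennrealOfReal
  have hweight : MemLp (fun x => Real.exp (a * ‖x‖ / p)) (ENNReal.ofReal p) μ :=
    memLp_exp_div_of_integrable_exp (by fun_prop) hp hexp
  have hphase (x : EuclideanSpace ℝ (Fin n)) :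
      ‖cexp (-I * ∑ j, z j * (x j : ℂ))‖ ≤ Real.exp (a / (2 * p) * ‖x‖) :=
    norm_cexp_neg_I_mul_sum_le (by positivity)
      (fun j => (hz j).le.trans_eq (by rw [Fintype.card_fin]; ring)) x
  have hmeas : AEStronglyMeasurable (fun x => cexp (-I * ∑ j, z j * (x j : ℂ)) * (f x : ℂ)) μ :=
    (Continuous.aestronglyMeasurable (by fun_prop)).mul
      (continuous_ofReal.comp_aestronglyMeasurable hf.1)
  refine (hweight.integrable_mul hf).norm.mono' (hmeas.norm.mul (by fun_prop))
    (.of_forall fun x => ?_)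
  simp only [Pi.mul_apply, norm_mul, norm_norm, norm_real, Real.norm_of_nonneg (Real.exp_pos _).le]
  calc ‖cexp (-I * ∑ j, z j * (x j : ℂ))‖ * ‖f x‖ * Real.exp (a / (2 * p) * ‖x‖)
      ≤ Real.exp (a / (2 * p) * ‖x‖) * ‖f x‖ * Real.exp (a / (2 * p) * ‖x‖) := by
        gcongr; exact hphase x
    _ = Real.exp (a * ‖x‖ / p) * ‖f x‖ := by
        rw [mul_right_comm, ← Real.exp_add]; ring_nf

/-- For an exponentially bounded finite Borel measure `μ` on `ℝⁿ`
and `f ∈ L^q(μ)` with `1 < q < ∞`, `1/p + 1/q = 1`, for every `z ∈ ℂⁿ` with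
`|Im z_j| < a/(2√n p)` for all `j`, the integral
`∫ |exp(-i ∑ z_j x_j) f(x)| e^{(a/(2p))‖x‖} dμ(x)` is finite. -/
theorem integrable_exp_mul_of_small_imaginary_part
    (n : ℕ) (μ : Measure (EuclideanSpace ℝ (Fin n))) [IsFiniteMeasure μ]
    (a : ℝ) (ha : 0 < a)
    (hexp : Integrable (fun x => Real.exp (a * ‖x‖)) μ)
    (p q : ℝ) (hpq : p.HolderConjugate q)
    (f : EuclideanSpace ℝ (Fin n) → ℝ) (hf : MemLp f (ENNReal.ofReal q) μ)
    (z : Fin n → ℂ) (hz : ∀ j, |(z j).im| < a / (2 * Real.sqrt n * p)) :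
    Integrable
      (fun x => ‖Complex.exp (-I * ∑ j, z j * (x j : ℂ)) * (f x : ℂ)‖ *
        Real.exp (a / (2 * p) * ‖x‖)) μ :=
  integrable_exp_mul_of_small_imaginary_part_general n μ a ha hexp p q hpq f hf z hz
end

section
/- Let μ be a finite Borel measure on ℝ satisfying ∫_ℝ e^{a|t|} dμ(t) < ∞ for some a > 0. Then μ is determinate: any finite Borel measure ν on ℝ with ∫ t^k dν = ∫ t^k dμ for all k ∈ ℕ equals μ. -/
open MeasureTheory ProbabilityTheory Filter Set Real
open scoped Nat Topology

/-!
Because the even moments of `ν` agree with those of `μ`, monotone convergence applied to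
`cosh (a x) = ∑ (a x) ^ (2 j) / (2 j)!` gives `∫ cosh (a x) dν = ∫ cosh (a x) dμ < ∞`, so `ν` has
exponential moments of order `a` as well. The complex moment generating functions of `μ` and `ν`
are then holomorphic on the strip `|Re z| < a`, with the moments as Taylor coefficients at `0`;
hence they agree on the strip, in particular on the imaginary axis, where they are the
characteristic functions, and these determine finite measures.
-/

lemma Real.cosh_le_exp_abs (x : ℝ) : cosh x ≤ exp |x| := by
  rw [← cosh_abs, cosh_eq]
  linarith [exp_le_exp.2 (neg_le_self (abs_nonneg x))]

lemma Real.exp_abs_le_two_mul_cosh (x : ℝ) : exp |x| ≤ 2 * cosh x := by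
  rw [cosh_eq]
  linarith [exp_abs_le x]

lemma AnalyticAt.eventuallyEq_of_iteratedDeriv_eq {𝕜 : Type*} [NontriviallyNormedField 𝕜]
    [CompleteSpace 𝕜] [CharZero 𝕜] {f g : 𝕜 → 𝕜} {x : 𝕜} (hf : AnalyticAt 𝕜 f x)
    (hg : AnalyticAt 𝕜 g x) (h : ∀ n, iteratedDeriv n f x = iteratedDeriv n g x) :
    f =ᶠ[𝓝 x] g := by
  have hfg := hf.hasFPowerSeriesAt.sub hg.hasFPowerSeriesAt
  simp only [h, sub_self] at hfg
  filter_upwards [hfg.eventually_eq_zero] with z hz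
  exact sub_eq_zero.1 hz

namespace MomentProblem

variable {ρ : Measure ℝ} {a : ℝ}

lemma integrable_exp_mul_of_integrable_exp_mul_abs (h : Integrable (fun x => exp (a * |x|)) ρ)
    {t : ℝ} (ht : |t| ≤ a) : Integrable (fun x => exp (t * x)) ρ := by
  refine h.mono' (by fun_prop) (ae_of_all _ fun x => ?_)
  rw [norm_of_nonneg (exp_nonneg _), exp_le_exp]
  calc t * x ≤ |t| * |x| := (le_abs_self _).trans (abs_mul t x).le
    _ ≤ a * |x| := by gcongr

lemma Ioo_subset_interior_integrableExpSet (h : Integrable (fun x => exp (a * |x|)) ρ) :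
    Ioo (-a) a ⊆ interior (integrableExpSet id ρ) :=
  interior_maximal
    (fun _ ht => integrable_exp_mul_of_integrable_exp_mul_abs h (abs_lt.2 ht).le) isOpen_Ioo

lemma lintegral_ofReal_cosh_mul (hρ : ∀ k : ℕ, Integrable (fun x => x ^ k) ρ) (b : ℝ) :
    ∫⁻ x, ENNReal.ofReal (cosh (b * x)) ∂ρ
      = ∑' j, ENNReal.ofReal (b ^ (2 * j) / (2 * j)! * ∫ x, x ^ (2 * j) ∂ρ) := by
  have hterm_nonneg (j : ℕ) (y : ℝ) : 0 ≤ y ^ (2 * j) / (2 * j)! := by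
    have := (even_two_mul j).pow_nonneg y
    positivity
  calc ∫⁻ x, ENNReal.ofReal (cosh (b * x)) ∂ρ
      = ∫⁻ x, ∑' j, ENNReal.ofReal ((b * x) ^ (2 * j) / (2 * j)!) ∂ρ := by
        refine lintegral_congr fun x => ?_
        rw [cosh_eq_tsum, ENNReal.ofReal_tsum_of_nonneg (hterm_nonneg · _)
          (hasSum_cosh _).summable]
    _ = ∑' j, ∫⁻ x, ENNReal.ofReal ((b * x) ^ (2 * j) / (2 * j)!) ∂ρ :=
        lintegral_tsum fun j => by fun_prop
    _ = ∑' j, ENNReal.ofReal (b ^ (2 * j) / (2 * j)! * ∫ x, x ^ (2 * j) ∂ρ) := by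
        refine tsum_congr fun j => ?_
        have hfun : (fun x : ℝ => (b * x) ^ (2 * j) / (2 * j)!)
            = fun x => b ^ (2 * j) / (2 * j)! * x ^ (2 * j) := by
          funext x
          rw [mul_pow]
          ring
        rw [← integral_const_mul, ← hfun, ofReal_integral_eq_lintegral_ofReal]
        · exact hfun ▸ (hρ (2 * j)).const_mul _
        · exact ae_of_all _ fun x => hterm_nonneg j _

lemma integrable_exp_mul_abs_of_moments_eq {μ ν : Measure ℝ} (ha : 0 < a)
    (hμ : Integrable (fun x => exp (a * |x|)) μ) (hν : ∀ k : ℕ, Integrable (fun x => x ^ k) ν)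
    (hmom : ∀ k : ℕ, ∫ x, x ^ k ∂ν = ∫ x, x ^ k ∂μ) :
    Integrable (fun x => exp (a * |x|)) ν := by
  have hμ_pow : ∀ k : ℕ, Integrable (fun x => x ^ k) μ :=
    integrable_pow_of_mem_interior_integrableExpSet
      (Ioo_subset_interior_integrableExpSet hμ ⟨neg_neg_of_pos ha, ha⟩)
  have hcosh :
      ∫⁻ x, ENNReal.ofReal (cosh (a * x)) ∂ν = ∫⁻ x, ENNReal.ofReal (cosh (a * x)) ∂μ := by
    simp only [lintegral_ofReal_cosh_mul hν, lintegral_ofReal_cosh_mul hμ_pow, hmom]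
  have habs (x : ℝ) : a * |x| = |a * x| := by rw [abs_mul, abs_of_pos ha]
  refine ⟨by fun_prop, ?_⟩
  rw [hasFiniteIntegral_iff_ofReal (ae_of_all _ fun _ => (exp_pos _).le)]
  calc ∫⁻ x, ENNReal.ofReal (exp (a * |x|)) ∂ν
      ≤ ∫⁻ x, 2 * ENNReal.ofReal (cosh (a * x)) ∂ν := lintegral_mono fun x => by
        rw [← ENNReal.ofReal_ofNat, ← ENNReal.ofReal_mul zero_le_two, habs]
        exact ENNReal.ofReal_le_ofReal (exp_abs_le_two_mul_cosh _)
    _ = 2 * ∫⁻ x, ENNReal.ofReal (cosh (a * x)) ∂μ := by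
        rw [lintegral_const_mul _ (by fun_prop), hcosh]
    _ ≤ 2 * ∫⁻ x, ENNReal.ofReal (exp (a * |x|)) ∂μ := by
        gcongr with x
        rw [habs]
        exact cosh_le_exp_abs _
    _ < ⊤ := ENNReal.mul_lt_top ENNReal.ofNat_lt_top <|
        (hasFiniteIntegral_iff_ofReal (ae_of_all _ fun _ => (exp_pos _).le)).1 hμ.2

lemma eqOn_complexMGF_of_moments_eq {μ ν : Measure ℝ} (ha : 0 < a)
    (hμ : Integrable (fun x => exp (a * |x|)) μ) (hν : Integrable (fun x => exp (a * |x|)) ν)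
    (hmom : ∀ k : ℕ, ∫ x, x ^ k ∂ν = ∫ x, x ^ k ∂μ) :
    EqOn (complexMGF id ν) (complexMGF id μ) {z | z.re ∈ Ioo (-a) a} := by
  have hstrip {ρ : Measure ℝ} (h : Integrable (fun x => exp (a * |x|)) ρ) :
      AnalyticOnNhd ℂ (complexMGF id ρ) {z | z.re ∈ Ioo (-a) a} :=
    analyticOnNhd_complexMGF.mono fun _ hz => Ioo_subset_interior_integrableExpSet h hz
  have h0 : (0 : ℂ) ∈ {z : ℂ | z.re ∈ Ioo (-a) a} := ⟨by simpa using ha, by simpa using ha⟩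
  have hderiv (n : ℕ) :
      iteratedDeriv n (complexMGF id ν) 0 = iteratedDeriv n (complexMGF id μ) 0 := by
    rw [iteratedDeriv_complexMGF (Ioo_subset_interior_integrableExpSet hν h0),
      iteratedDeriv_complexMGF (Ioo_subset_interior_integrableExpSet hμ h0)]
    simp only [id, zero_mul, Complex.exp_zero, mul_one, ← Complex.ofReal_pow,
      integral_complex_ofReal, hmom]
  exact (hstrip hν).eqOn_of_preconnected_of_eventuallyEq (hstrip hμ)
    ((convex_Ioo (-a) a).linear_preimage Complex.reLm).isPreconnected h0
    ((hstrip hν 0 h0).eventuallyEq_of_iteratedDeriv_eq (hstrip hμ 0 h0) hderiv)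

end MomentProblem

/-- A finite Borel measure on `ℝ` with `∫ e^{a|t|} dμ < ∞` for
some `a > 0` is determinate (Hamburger moment problem). -/
theorem determinate_of_exponentially_bounded_real
    (μ : Measure ℝ) [IsFiniteMeasure μ]
    (a : ℝ) (ha : 0 < a)
    (hexp : Integrable (fun t => Real.exp (a * |t|)) μ)
    (ν : Measure ℝ) [IsFiniteMeasure ν]
    (hint : ∀ k : ℕ, Integrable (fun t => t ^ k) ν)
    (hmom : ∀ k : ℕ, ∫ t, t ^ k ∂ν = ∫ t, t ^ k ∂μ) :
    ν = μ := by
  have hν := MomentProblem.integrable_exp_mul_abs_of_moments_eq ha hexp hint hmom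
  refine Measure.ext_of_charFun (funext fun t => ?_)
  rw [← complexMGF_id_mul_I, ← complexMGF_id_mul_I]
  exact MomentProblem.eqOn_complexMGF_of_moments_eq ha hexp hν hmom (by simpa using ha)
end

section
/- Let f_s be the s-th Hermite function and let φ ∈ C_c^∞(ℝ) with ‖φ‖₂ = 1, supported in [a,b]. Define g(x) = ∫_ℝ |f_s(x - q)|² |φ(q)|² dq. Then there exist a constant M' > 0, a constant C > 0, and a polynomial p of degree 2s such that g(x) ≤ M' e^{-x²} e^{2C|x|} p(x) for all x, and consequently ∫_ℝ e^{α|x|} g(x) dx < ∞ for every α > 0. -/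
open MeasureTheory

/-- The physicists' Hermite polynomial `H_s(x) = (-1)^s e^{x²} dˢ/dxˢ e^{-x²}`
(as a function). -/
noncomputable def physHermite (s : ℕ) (x : ℝ) : ℝ :=
  (-1) ^ s * Real.exp (x ^ 2) * iteratedDeriv s (fun t => Real.exp (-t ^ 2)) x

/-- The `s`-th Hermite function `f_s(x) = N_s e^{-x²/2} H_s(x)` with
`N_s = (√π 2^s s!)^{-1/2}`. -/
noncomputable def hermiteFun (s : ℕ) (x : ℝ) : ℝ :=
  (Real.sqrt (Real.sqrt Real.pi * 2 ^ s * s.factorial))⁻¹ *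
    Real.exp (-x ^ 2 / 2) * physHermite s x

noncomputable def hermPoly : ℕ → Polynomial ℝ
  | 0 => 1
  | (n+1) => 2 * Polynomial.X * hermPoly n - (hermPoly n).derivative

lemma iteratedDeriv_gauss (n : ℕ) (x : ℝ) :
    iteratedDeriv n (fun t => Real.exp (-t ^ 2)) x
      = (-1) ^ n * (hermPoly n).eval x * Real.exp (-x ^ 2) := by
  induction n generalizing x with
  | zero => simp [hermPoly]
  | succ n ih =>
    rw [iteratedDeriv_succ]
    have h1 : iteratedDeriv n (fun t => Real.exp (-t ^ 2))
        = fun x => (-1) ^ n * (hermPoly n).eval x * Real.exp (-x ^ 2) := funext ih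
    rw [h1]
    have h2 : HasDerivAt (fun x : ℝ => (-1) ^ n * (hermPoly n).eval x * Real.exp (-x ^ 2))
        ((-1) ^ (n+1) * (hermPoly (n+1)).eval x * Real.exp (-x ^ 2)) x := by
      have hp : HasDerivAt (fun x : ℝ => (-1 : ℝ) ^ n * (hermPoly n).eval x)
          ((-1) ^ n * (hermPoly n).derivative.eval x) x :=
        ((hermPoly n).hasDerivAt x).const_mul _
      have he : HasDerivAt (fun x : ℝ => Real.exp (-x ^ 2)) (-(2*x) * Real.exp (-x ^ 2)) x := by
        have : HasDerivAt (fun x : ℝ => -x ^ 2) (-(2*x)) x := by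
          simpa using ((hasDerivAt_pow 2 x).fun_neg)
        simpa [mul_comm] using this.exp
      have := hp.fun_mul he
      refine this.congr_deriv ?_
      simp only [hermPoly, pow_succ, Polynomial.eval_sub, Polynomial.eval_mul,
        Polynomial.eval_ofNat, Polynomial.eval_X]
      ring
    exact h2.deriv

lemma physHermite_eq' (n : ℕ) (x : ℝ) : physHermite n x = (hermPoly n).eval x := by
  have h : Real.exp (x ^ 2) * Real.exp (-x ^ 2) = 1 := by
    rw [← Real.exp_add]; simp
  have hs : ((-1:ℝ) ^ n) * ((-1:ℝ) ^ n) = 1 := by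
    rw [← pow_add, ← two_mul, pow_mul]; norm_num
  unfold physHermite
  rw [iteratedDeriv_gauss]
  have h2 : (-1:ℝ) ^ n * Real.exp (x ^ 2) * ((-1) ^ n * (hermPoly n).eval x * Real.exp (-x ^ 2))
      = ((-1:ℝ) ^ n * (-1) ^ n) * (Real.exp (x ^ 2) * Real.exp (-x ^ 2)) * (hermPoly n).eval x := by
    ring
  rw [h2, hs, h]; ring

lemma hermPoly_natDegree_le (n : ℕ) : (hermPoly n).natDegree ≤ n := by
  induction n with
  | zero => simp [hermPoly]
  | succ n ih =>
    show (2 * Polynomial.X * hermPoly n - (hermPoly n).derivative).natDegree ≤ n + 1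
    refine le_trans (Polynomial.natDegree_sub_le _ _) (max_le ?_ ?_)
    · refine le_trans (Polynomial.natDegree_mul_le) ?_
      have h1 : (2 * Polynomial.X : Polynomial ℝ).natDegree ≤ 1 := by
        refine le_trans Polynomial.natDegree_mul_le ?_
        simp
      omega
    · have := Polynomial.natDegree_derivative_le (hermPoly n)
      omega

lemma poly_sq_bound (Q : Polynomial ℝ) (n : ℕ) (h : Q.natDegree ≤ n) :
    ∃ K : ℝ, 0 < K ∧ ∀ y : ℝ, (Q.eval y) ^ 2 ≤ K * (1 + y ^ 2) ^ n := by
  set S := ∑ i ∈ Finset.range (n+1), |Q.coeff i| with hS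
  refine ⟨S ^ 2 + 1, by positivity, fun y => ?_⟩
  have hs1 : (1:ℝ) ≤ Real.sqrt (1 + y ^ 2) := by
    have := Real.sqrt_le_sqrt (show (1:ℝ) ≤ 1 + y ^ 2 by nlinarith)
    simpa using this
  have hy : |y| ≤ Real.sqrt (1 + y ^ 2) := by
    rw [show |y| = Real.sqrt (y^2) by rw [Real.sqrt_sq_eq_abs]]
    exact Real.sqrt_le_sqrt (by nlinarith)
  have h1 : |Q.eval y| ≤ S * Real.sqrt (1 + y ^ 2) ^ n := by
    rw [Polynomial.eval_eq_sum_range' (lt_of_le_of_lt h (Nat.lt_succ_self n))]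
    calc |∑ i ∈ Finset.range (n+1), Q.coeff i * y ^ i|
        ≤ ∑ i ∈ Finset.range (n+1), |Q.coeff i * y ^ i| :=
          Finset.abs_sum_le_sum_abs _ _
      _ ≤ ∑ i ∈ Finset.range (n+1), |Q.coeff i| * Real.sqrt (1 + y ^ 2) ^ n := by
          refine Finset.sum_le_sum fun i hi => ?_
          rw [abs_mul, abs_pow]
          refine mul_le_mul_of_nonneg_left ?_ (abs_nonneg _)
          calc |y| ^ i ≤ Real.sqrt (1 + y ^ 2) ^ i :=
                pow_le_pow_left₀ (abs_nonneg _) hy i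
            _ ≤ Real.sqrt (1 + y ^ 2) ^ n := by
                refine pow_le_pow_right₀ hs1 ?_
                exact Nat.lt_succ_iff.mp (Finset.mem_range.mp hi)
      _ = S * Real.sqrt (1 + y ^ 2) ^ n := by rw [← Finset.sum_mul]
  have h2 : Q.eval y ^ 2 ≤ (S * Real.sqrt (1 + y ^ 2) ^ n) ^ 2 := by
    rw [← sq_abs]
    exact pow_le_pow_left₀ (abs_nonneg _) h1 2
  have h3 : (S * Real.sqrt (1 + y ^ 2) ^ n) ^ 2 = S ^ 2 * (1 + y ^ 2) ^ n := by
    rw [mul_pow, ← pow_mul, mul_comm n 2, pow_mul, Real.sq_sqrt (by positivity)]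
  have h4 : (0:ℝ) ≤ (1 + y ^ 2) ^ n := by positivity
  nlinarith

lemma hermiteFun_continuous (s : ℕ) : Continuous (hermiteFun s) := by
  have h : hermiteFun s = fun x =>
      (Real.sqrt (Real.sqrt Real.pi * 2 ^ s * s.factorial))⁻¹ *
        Real.exp (-x ^ 2 / 2) * (hermPoly s).eval x := by
    funext x; rw [hermiteFun, physHermite_eq']
  rw [h]
  exact (continuous_const.mul (((continuous_pow (M := ℝ) 2).neg.div_const 2).rexp)).mul
    (hermPoly s).continuous_aeval

lemma hermiteFun_sq_bound (s : ℕ) :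
    ∃ D : ℝ, 0 < D ∧ ∀ x : ℝ,
      hermiteFun s x ^ 2 ≤ D * (Real.exp (-x ^ 2) * (1 + x ^ 2) ^ s) := by
  obtain ⟨K, hK, hKb⟩ := poly_sq_bound (hermPoly s) s (hermPoly_natDegree_le s)
  set c : ℝ := (Real.sqrt (Real.sqrt Real.pi * 2 ^ s * s.factorial))⁻¹ with hc
  refine ⟨c ^ 2 * K + 1, by positivity, fun x => ?_⟩
  have he : Real.exp (-x ^ 2 / 2) ^ 2 = Real.exp (-x ^ 2) := by
    rw [sq, ← Real.exp_add]
    ring_nf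
  have heq : hermiteFun s x ^ 2
      = c ^ 2 * Real.exp (-x ^ 2) * (hermPoly s).eval x ^ 2 := by
    rw [hermiteFun, physHermite_eq', mul_pow, mul_pow, he, hc]
  rw [heq]
  have h1 := hKb x
  calc c ^ 2 * Real.exp (-x ^ 2) * (hermPoly s).eval x ^ 2
      ≤ c ^ 2 * Real.exp (-x ^ 2) * (K * (1 + x ^ 2) ^ s) :=
        mul_le_mul_of_nonneg_left h1 (by positivity)
    _ ≤ (c ^ 2 * K + 1) * (Real.exp (-x ^ 2) * (1 + x ^ 2) ^ s) := by
        have hp : (0:ℝ) ≤ Real.exp (-x ^ 2) * (1 + x ^ 2) ^ s := by positivity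
        nlinarith [hp]

lemma shift_bound (s : ℕ) (C x q : ℝ) (hC : 1 ≤ C) (hq : |q| ≤ C) :
    Real.exp (-(x - q) ^ 2) * (1 + (x - q) ^ 2) ^ s ≤
      (1 + 2 * C ^ 2) ^ s *
        (Real.exp (-x ^ 2) * Real.exp (2 * C * |x|) * (1 + x ^ 2) ^ s) := by
  have hA : (0:ℝ) ≤ |x| := abs_nonneg x
  have hxq1 : -(x * q) ≤ |x| * C := by
    calc -(x * q) ≤ |x * q| := neg_le_abs _
      _ = |x| * |q| := abs_mul x q
      _ ≤ |x| * C := mul_le_mul_of_nonneg_left hq hA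
  have hxq2 : x * q ≤ |x| * C := by
    calc x * q ≤ |x * q| := le_abs_self _
      _ = |x| * |q| := abs_mul x q
      _ ≤ |x| * C := mul_le_mul_of_nonneg_left hq hA
  have hq2 : q ^ 2 ≤ C ^ 2 := by nlinarith [sq_abs q, abs_nonneg q]
  have he : Real.exp (-(x - q) ^ 2) ≤ Real.exp (-x ^ 2) * Real.exp (2 * C * |x|) := by
    rw [← Real.exp_add]
    apply Real.exp_le_exp.mpr
    nlinarith [sq_abs x, sq_nonneg q]
  have hp : (1 + (x - q) ^ 2) ^ s ≤ (1 + 2 * C ^ 2) ^ s * (1 + x ^ 2) ^ s := by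
    rw [← mul_pow]
    apply pow_le_pow_left₀ (by positivity)
    nlinarith [sq_abs x, sq_nonneg (|x| - 1), hC]
  calc Real.exp (-(x - q) ^ 2) * (1 + (x - q) ^ 2) ^ s
      ≤ (Real.exp (-x ^ 2) * Real.exp (2 * C * |x|)) *
          ((1 + 2 * C ^ 2) ^ s * (1 + x ^ 2) ^ s) :=
        mul_le_mul he hp (by positivity) (by positivity)
    _ = (1 + 2 * C ^ 2) ^ s *
          (Real.exp (-x ^ 2) * Real.exp (2 * C * |x|) * (1 + x ^ 2) ^ s) := by ring

lemma poly_le_exp (s : ℕ) (x : ℝ) :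
    (1 + x ^ 2) ^ s ≤ (4 ^ s * s.factorial * Real.exp (1/4)) * Real.exp (x ^ 2 / 4) := by
  have h := Real.pow_div_factorial_le_exp (x := (1 + x ^ 2) / 4) (by positivity) s
  rw [div_pow, div_div] at h
  have hd : (0:ℝ) < 4 ^ s * (s.factorial : ℝ) := by
    have := s.factorial_pos
    positivity
  have h2 := (div_le_iff₀ hd).mp h
  have he : Real.exp ((1 + x ^ 2) / 4) = Real.exp (1/4) * Real.exp (x ^ 2 / 4) := by
    rw [← Real.exp_add]; ring_nf
  calc (1 + x ^ 2) ^ s ≤ Real.exp ((1 + x ^ 2) / 4) * (4 ^ s * s.factorial) := h2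
    _ = (4 ^ s * s.factorial * Real.exp (1/4)) * Real.exp (x ^ 2 / 4) := by rw [he]; ring

/-- For `φ ∈ C_c^∞(ℝ)` with `‖φ‖₂ = 1` supported in `[a,b]`, the
density `g(x) = ∫ |f_s(x-q)|² |φ(q)|² dq` of the unsharp position margin obeys
`g(x) ≤ M' e^{-x²} e^{2C|x|} p(x)` for some constants `M', C > 0` and a
polynomial `p` of degree `2s`; consequently `∫ e^{α|x|} g(x) dx < ∞` for every
`α > 0`. -/
theorem unsharp_position_density_exponentially_bounded
    (s : ℕ) (a b : ℝ) (φ : ℝ → ℝ)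
    (hφsmooth : ContDiff ℝ (⊤ : ℕ∞) φ) (hφsupp : HasCompactSupport φ)
    (hφab : tsupport φ ⊆ Set.Icc a b)
    (hφnorm : ∫ q, φ q ^ 2 = 1)
    (g : ℝ → ℝ)
    (hg : ∀ x, g x = ∫ q, hermiteFun s (x - q) ^ 2 * φ q ^ 2) :
    (∃ (M' : ℝ) (_ : 0 < M') (C : ℝ) (_ : 0 < C) (p : Polynomial ℝ),
      p.natDegree = 2 * s ∧
      ∀ x, g x ≤ M' * Real.exp (-x ^ 2) * Real.exp (2 * C * |x|) * p.eval x) ∧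
    ∀ α : ℝ, 0 < α → Integrable (fun x => Real.exp (α * |x|) * g x) := by

  classical
  obtain ⟨D, hD, hDb⟩ := hermiteFun_sq_bound s
  set C : ℝ := max 1 (max |a| |b|) with hCdef
  have hC1 : (1:ℝ) ≤ C := le_max_left _ _
  have hC0 : (0:ℝ) < C := lt_of_lt_of_le one_pos hC1
  set E : ℝ := D * (1 + 2 * C ^ 2) ^ s with hEdef
  have hE : 0 < E := by positivity
  have hφc : Continuous φ := hφsmooth.continuous
  have hφ2supp : HasCompactSupport (fun q => φ q ^ 2) :=
    hφsupp.mono (fun q hq => by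
      simp only [Function.mem_support] at hq ⊢
      intro h; exact hq (by rw [h]; ring))
  have hφ2int : Integrable (fun q => φ q ^ 2) :=
    (hφc.pow 2).integrable_of_hasCompactSupport hφ2supp
  have hermC : Continuous (hermiteFun s) := hermiteFun_continuous s
  have hqC : ∀ q : ℝ, φ q ≠ 0 → |q| ≤ C := by
    intro q hq
    have hmem : q ∈ Set.Icc a b := hφab (subset_closure hq)
    rw [abs_le]
    constructor
    · calc -C ≤ -|a| := neg_le_neg ((le_max_left _ _).trans (le_max_right _ _))
        _ ≤ a := neg_abs_le a
        _ ≤ q := hmem.1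
    · calc q ≤ b := hmem.2
        _ ≤ |b| := le_abs_self b
        _ ≤ C := (le_max_right _ _).trans (le_max_right _ _)
  have hpt : ∀ x q : ℝ, hermiteFun s (x - q) ^ 2 * φ q ^ 2
      ≤ (E * (Real.exp (-x ^ 2) * Real.exp (2 * C * |x|) * (1 + x ^ 2) ^ s)) * φ q ^ 2 := by
    intro x q
    by_cases hq : φ q = 0
    · simp [hq]
    · refine mul_le_mul_of_nonneg_right ?_ (sq_nonneg _)
      calc hermiteFun s (x - q) ^ 2
          ≤ D * (Real.exp (-(x - q) ^ 2) * (1 + (x - q) ^ 2) ^ s) := hDb _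
        _ ≤ D * ((1 + 2 * C ^ 2) ^ s *
              (Real.exp (-x ^ 2) * Real.exp (2 * C * |x|) * (1 + x ^ 2) ^ s)) :=
            mul_le_mul_of_nonneg_left (shift_bound s C x q hC1 (hqC q hq)) hD.le
        _ = E * (Real.exp (-x ^ 2) * Real.exp (2 * C * |x|) * (1 + x ^ 2) ^ s) := by
            rw [hEdef]; ring
  have hgb : ∀ x, g x ≤ E * (Real.exp (-x ^ 2) * Real.exp (2 * C * |x|) * (1 + x ^ 2) ^ s) := by
    intro x
    rw [hg x]
    have hint1 : Integrable (fun q => hermiteFun s (x - q) ^ 2 * φ q ^ 2) := by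
      apply Continuous.integrable_of_hasCompactSupport
      · exact ((hermC.comp (continuous_const.sub continuous_id)).pow 2).mul (hφc.pow 2)
      · exact hφsupp.mono (fun q hq => by
          simp only [Function.mem_support] at hq ⊢
          intro h; exact hq (by rw [h]; ring))
    calc (∫ q, hermiteFun s (x - q) ^ 2 * φ q ^ 2)
        ≤ ∫ q, (E * (Real.exp (-x ^ 2) * Real.exp (2 * C * |x|) * (1 + x ^ 2) ^ s)) * φ q ^ 2 :=
          integral_mono hint1 (hφ2int.const_mul _) (hpt x)
      _ = E * (Real.exp (-x ^ 2) * Real.exp (2 * C * |x|) * (1 + x ^ 2) ^ s) := by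
          rw [integral_const_mul, hφnorm, mul_one]
  have hgnn : ∀ x, 0 ≤ g x := by
    intro x
    rw [hg x]
    exact integral_nonneg (fun q => by positivity)
  have hgc : Continuous g := by
    have hconv : g = convolution (fun q => φ q ^ 2) (fun y => hermiteFun s y ^ 2)
        (ContinuousLinearMap.mul ℝ ℝ) volume := by
      funext x
      rw [hg x, convolution_def]
      simp only [ContinuousLinearMap.mul_apply']
      congr 1
      funext q
      ring
    rw [hconv]
    exact hφ2supp.continuous_convolution_left _ (hφc.pow 2)
      ((hermC.pow 2).locallyIntegrable)
  constructor
  · refine ⟨1, one_pos, C, hC0, Polynomial.C E * (1 + Polynomial.X ^ 2) ^ s, ?_, ?_⟩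
    · have h2 : ((1 + Polynomial.X ^ 2 : Polynomial ℝ) ^ s).natDegree = 2 * s := by
        compute_degree! <;> omega
      rw [Polynomial.natDegree_C_mul hE.ne', h2]
    · intro x
      have hpe : (Polynomial.C E * (1 + Polynomial.X ^ 2) ^ s).eval x = E * (1 + x ^ 2) ^ s := by
        simp
      rw [hpe]
      calc g x ≤ E * (Real.exp (-x ^ 2) * Real.exp (2 * C * |x|) * (1 + x ^ 2) ^ s) := hgb x
        _ = 1 * Real.exp (-x ^ 2) * Real.exp (2 * C * |x|) * (E * (1 + x ^ 2) ^ s) := by ring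
  · intro α hα
    set β : ℝ := α + 2 * C with hβdef
    set F : ℝ := 4 ^ s * s.factorial * Real.exp (1/4) with hFdef
    have hF : (0:ℝ) < F := by
      have := s.factorial_pos
      positivity
    set K0 : ℝ := E * Real.exp (β ^ 2) * F with hK0
    have hbd : ∀ x : ℝ, Real.exp (α * |x|) * g x ≤ K0 * Real.exp (-(1/2) * x ^ 2) := by
      intro x
      have h2 : Real.exp (α * |x|) * Real.exp (2 * C * |x|)
          ≤ Real.exp (β ^ 2) * Real.exp (x ^ 2 / 4) := by
        rw [← Real.exp_add, ← Real.exp_add]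
        apply Real.exp_le_exp.mpr
        rw [hβdef]
        nlinarith [sq_nonneg (|x| / 2 - (α + 2 * C)), abs_nonneg x, hα.le, hC0.le, sq_abs x]
      have h3 := poly_le_exp s x
      calc Real.exp (α * |x|) * g x
          ≤ Real.exp (α * |x|) *
              (E * (Real.exp (-x ^ 2) * Real.exp (2 * C * |x|) * (1 + x ^ 2) ^ s)) :=
            mul_le_mul_of_nonneg_left (hgb x) (Real.exp_pos _).le
        _ = E * Real.exp (-x ^ 2) *
              ((Real.exp (α * |x|) * Real.exp (2 * C * |x|)) * (1 + x ^ 2) ^ s) := by ring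
        _ ≤ E * Real.exp (-x ^ 2) *
              ((Real.exp (β ^ 2) * Real.exp (x ^ 2 / 4)) * (F * Real.exp (x ^ 2 / 4))) := by
            refine mul_le_mul_of_nonneg_left
              (mul_le_mul h2 (by simpa [hFdef] using h3) (by positivity) (by positivity))
              (by positivity)
        _ = K0 * (Real.exp (-x ^ 2) * Real.exp (x ^ 2 / 4) * Real.exp (x ^ 2 / 4)) := by
            rw [hK0]; ring
        _ = K0 * Real.exp (-(1/2) * x ^ 2) := by
            rw [← Real.exp_add, ← Real.exp_add]; ring_nf
    have hmaj : Integrable (fun x : ℝ => K0 * Real.exp (-(1/2) * x ^ 2)) :=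
      (integrable_exp_neg_mul_sq one_half_pos).const_mul K0
    refine hmaj.mono' ?_ ?_
    · exact ((Real.continuous_exp.comp (continuous_const.mul continuous_abs)).mul
        hgc).aestronglyMeasurable
    · filter_upwards with x
      rw [Real.norm_eq_abs, abs_of_nonneg (mul_nonneg (Real.exp_pos _).le (hgnn x))]
      exact hbd x
end

section
/- Let μ be a finite Borel measure on ℝ² = [0,∞) × ℝ in polar form, i.e., a finite Borel measure on [0,∞) × [0,2π) with all moments ∫ r^n θ^m dμ finite, such that the angular marginal (supported in the compact set [0,2π]) and the radial marginal on [0,∞) are both determinate on their respective domains. Then μ is determinate on [0,∞) × [0,2π]. -/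
/-!
Only the marginals are determinate, so the joint moments are transferred to them by mixing.
For the weight `w(r, θ) = (θ / c) ^ m ∈ [0, 1]`, the measure "radial marginal of `w ν`" plus
"radial marginal of `(1 - w) μ`" has the moments of the radial marginal of `μ`, hence equals it;
cancelling, `w ν` and `w μ` have the same radial marginal, i.e. `∫_{r ∈ B} θ ^ m` agrees for
`ν` and `μ` for every Borel `B`. The same mixing with `ν` restricted to `{r ∈ B}` and `μ`
restricted to `{r ∉ B}`, now against the determinate angular marginal, gives
`ν (B ×ˢ A) = μ (B ×ˢ A)` for all Borel `A`, `B`.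
-/

open MeasureTheory

/-- One-dimensional determinacy on `K ⊆ ℝ`. -/
def DeterminateOn (K : Set ℝ) (μ : Measure ℝ) : Prop :=
  ∀ ν : Measure ℝ, IsFiniteMeasure ν → ν Kᶜ = 0 →
    (∀ k : ℕ, Integrable (fun t => t ^ k) ν) →
    (∀ k : ℕ, ∫ t, t ^ k ∂ν = ∫ t, t ^ k ∂μ) → ν = μ

open Set

/-- The test measures in `DeterminateOn K`. -/
structure HasMomentsOn (K : Set ℝ) (ρ : Measure ℝ) : Prop where
  isFiniteMeasure : IsFiniteMeasure ρ
  measure_compl : ρ Kᶜ = 0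
  integrable_pow : ∀ k : ℕ, Integrable (fun t => t ^ k) ρ

namespace HasMomentsOn

variable {K : Set ℝ} {ρ ρ' : Measure ℝ}

theorem mono (h : HasMomentsOn K ρ) (hle : ρ' ≤ ρ) : HasMomentsOn K ρ' where
  isFiniteMeasure := have := h.isFiniteMeasure; isFiniteMeasure_of_le ρ hle
  measure_compl := Measure.absolutelyContinuous_of_le hle h.measure_compl
  integrable_pow k := (h.integrable_pow k).mono_measure hle

theorem add (h : HasMomentsOn K ρ) (h' : HasMomentsOn K ρ') : HasMomentsOn K (ρ + ρ') where
  isFiniteMeasure := have := h.isFiniteMeasure; have := h'.isFiniteMeasure; inferInstance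
  measure_compl := by simp [h.measure_compl, h'.measure_compl]
  integrable_pow k := (h.integrable_pow k).add_measure (h'.integrable_pow k)

end HasMomentsOn

theorem hasMomentsOn_map {α : Type*} [MeasurableSpace α] {κ : Measure α} [IsFiniteMeasure κ]
    {f : α → ℝ} (hf : Measurable f) {K : Set ℝ} (hK : MeasurableSet K) (hκK : κ (f ⁻¹' K)ᶜ = 0)
    (hκ : ∀ k : ℕ, Integrable (fun x => f x ^ k) κ) : HasMomentsOn K (κ.map f) where
  isFiniteMeasure := inferInstance
  measure_compl := by rwa [Measure.map_apply hf hK.compl]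
  integrable_pow k := (integrable_map_measure (by fun_prop) hf.aemeasurable).2 (hκ k)

theorem DeterminateOn.eq_of_add_eq {K : Set ℝ} {α α' γ : Measure ℝ}
    (hdet : DeterminateOn K (α + γ)) (hα' : HasMomentsOn K α')
    (hα : ∀ k : ℕ, Integrable (fun t => t ^ k) α) (hγ : HasMomentsOn K γ)
    (hmom : ∀ k : ℕ, ∫ t, t ^ k ∂α' = ∫ t, t ^ k ∂α) : α' = α := by
  have := hγ.isFiniteMeasure
  have hsum := hα'.add hγ
  have hmix : α' + γ = α + γ := hdet _ hsum.isFiniteMeasure hsum.measure_compl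
    hsum.integrable_pow fun k => by
      rw [integral_add_measure (hα'.integrable_pow k) (hγ.integrable_pow k),
        integral_add_measure (hα k) (hγ.integrable_pow k), hmom]
  rw [← Measure.add_sub_cancel (μ := α') (ν := γ), hmix, Measure.add_sub_cancel]

section WeightedFst

variable {α β : Type*} [MeasurableSpace α] [MeasurableSpace β] {κ : Measure (α × β)}
  {f : α × β → ℝ}

noncomputable def weightedFst (κ : Measure (α × β)) (f : α × β → ℝ) : Measure α :=
  (κ.withDensity fun z => ENNReal.ofReal (f z)).map Prod.fst

theorem weightedFst_le (hf : ∀ᵐ z ∂κ, f z ≤ 1) : weightedFst κ f ≤ κ.map Prod.fst := by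
  refine Measure.map_mono ((withDensity_mono ?_).trans_eq withDensity_one) measurable_fst
  exact hf.mono fun z hz => ENNReal.ofReal_le_one.2 hz

theorem weightedFst_add_weightedFst_one_sub (hf : Measurable f)
    (hf01 : ∀ᵐ z ∂κ, f z ∈ Icc 0 1) :
    weightedFst κ f + weightedFst κ (fun z => 1 - f z) = κ.map Prod.fst := by
  rw [weightedFst, weightedFst, ← Measure.map_add _ _ measurable_fst,
    ← withDensity_add_left (by fun_prop)]
  congr 1
  refine (withDensity_congr_ae (hf01.mono fun z hz => ?_)).trans withDensity_one
  simp [← ENNReal.ofReal_add hz.1 (sub_nonneg.2 hz.2)]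

theorem integral_weightedFst (hf : Measurable f) (hf0 : 0 ≤ᵐ[κ] f) {g : α → ℝ}
    (hg : Measurable g) : ∫ x, g x ∂weightedFst κ f = ∫ z, f z * g z.1 ∂κ := by
  rw [weightedFst, integral_map measurable_fst.aemeasurable hg.aestronglyMeasurable,
    integral_withDensity_eq_integral_toReal_smul (by fun_prop)
      (ae_of_all _ fun _ => ENNReal.ofReal_lt_top)]
  refine integral_congr_ae (hf0.mono fun z hz => ?_)
  simp [ENNReal.toReal_ofReal hz]

theorem measureReal_weightedFst (hf : Measurable f) (hf0 : 0 ≤ᵐ[κ] f) {s : Set α}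
    (hs : MeasurableSet s) : (weightedFst κ f).real s = ∫ z in Prod.fst ⁻¹' s, f z ∂κ := by
  rw [integral_eq_lintegral_of_nonneg_ae (ae_restrict_of_ae hf0) hf.aestronglyMeasurable,
    Measure.real, weightedFst, Measure.map_apply measurable_fst hs,
    withDensity_apply _ (measurable_fst hs)]

end WeightedFst

section Slices

variable {K : Set ℝ} {μ ν : Measure (ℝ × ℝ)} [IsFiniteMeasure μ] [IsFiniteMeasure ν]

theorem setIntegral_preimage_fst_eq_of_determinateOn_fst (hK : MeasurableSet K) {c : ℝ}
    (hc : 0 < c) (hμK : μ (K ×ˢ Icc 0 c)ᶜ = 0) (hνK : ν (K ×ˢ Icc 0 c)ᶜ = 0)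
    (hμ : ∀ k : ℕ, Integrable (fun z : ℝ × ℝ => z.1 ^ k) μ)
    (hν : ∀ k : ℕ, Integrable (fun z : ℝ × ℝ => z.1 ^ k) ν)
    (hdet : DeterminateOn K (μ.map Prod.fst))
    (hmom : ∀ n m : ℕ, ∫ z, z.1 ^ n * z.2 ^ m ∂ν = ∫ z, z.1 ^ n * z.2 ^ m ∂μ)
    (m : ℕ) {B : Set ℝ} (hB : MeasurableSet B) :
    ∫ z in Prod.fst ⁻¹' B, z.2 ^ m ∂ν = ∫ z in Prod.fst ⁻¹' B, z.2 ^ m ∂μ := by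
  set w : ℝ × ℝ → ℝ := fun z => (z.2 / c) ^ m
  have hw : Measurable w := by fun_prop
  have hw01 {κ : Measure (ℝ × ℝ)} (hκK : κ (K ×ˢ Icc 0 c)ᶜ = 0) : ∀ᵐ z ∂κ, w z ∈ Icc 0 1 := by
    refine (measure_eq_zero_iff_ae_notMem.1 hκK).mono fun z hz => ?_
    have hθ := (not_not.1 hz).2
    have hθc : 0 ≤ z.2 / c := div_nonneg hθ.1 hc.le
    exact ⟨pow_nonneg hθc m, pow_le_one₀ hθc ((div_le_one hc).2 hθ.2)⟩
  have hfst {κ : Measure (ℝ × ℝ)} [IsFiniteMeasure κ] (hκK : κ (K ×ˢ Icc 0 c)ᶜ = 0)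
      (hκ : ∀ k : ℕ, Integrable (fun z : ℝ × ℝ => z.1 ^ k) κ) :
      HasMomentsOn K (κ.map Prod.fst) :=
    hasMomentsOn_map measurable_fst hK
      (measure_mono_null (compl_subset_compl.2 (prod_subset_preimage_fst _ _)) hκK) hκ
  have hweight {κ : Measure (ℝ × ℝ)} (hκK : κ (K ×ˢ Icc 0 c)ᶜ = 0) (k : ℕ) :
      ∫ t, t ^ k ∂weightedFst κ w = (c ^ m)⁻¹ * ∫ z, z.1 ^ k * z.2 ^ m ∂κ := by
    rw [integral_weightedFst hw ((hw01 hκK).mono fun _ hz => hz.1) (by fun_prop),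
      ← integral_const_mul]
    congr 1 with z
    simp only [w, div_pow]
    ring
  have hdet' : DeterminateOn K (weightedFst μ w + weightedFst μ (fun z => 1 - w z)) := by
    rwa [weightedFst_add_weightedFst_one_sub hw (hw01 hμK)]
  have hslice : weightedFst ν w = weightedFst μ w :=
    hdet'.eq_of_add_eq ((hfst hνK hν).mono (weightedFst_le ((hw01 hνK).mono fun _ hz => hz.2)))
      ((hfst hμK hμ).mono (weightedFst_le ((hw01 hμK).mono fun _ hz => hz.2))).integrable_pow
      ((hfst hμK hμ).mono (weightedFst_le ((hw01 hμK).mono fun _ hz => by simp [hz.1])))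
      fun k => by rw [hweight hνK, hweight hμK, hmom]
  have hunweight {κ : Measure (ℝ × ℝ)} (hκK : κ (K ×ˢ Icc 0 c)ᶜ = 0) :
      ∫ z in Prod.fst ⁻¹' B, z.2 ^ m ∂κ = c ^ m * (weightedFst κ w).real B := by
    rw [measureReal_weightedFst hw ((hw01 hκK).mono fun _ hz => hz.1) hB, ← integral_const_mul]
    congr 1 with z
    simp only [w, div_pow]
    field_simp
  rw [hunweight hνK, hunweight hμK, hslice]

theorem eq_of_setIntegral_preimage_fst_eq (hK : MeasurableSet K)
    (hμK : μ (Prod.snd ⁻¹' K)ᶜ = 0) (hνK : ν (Prod.snd ⁻¹' K)ᶜ = 0)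
    (hμ : ∀ k : ℕ, Integrable (fun z : ℝ × ℝ => z.2 ^ k) μ)
    (hν : ∀ k : ℕ, Integrable (fun z : ℝ × ℝ => z.2 ^ k) ν)
    (hdet : DeterminateOn K (μ.map Prod.snd))
    (hslice : ∀ (m : ℕ) {B : Set ℝ}, MeasurableSet B →
      ∫ z in Prod.fst ⁻¹' B, z.2 ^ m ∂ν = ∫ z in Prod.fst ⁻¹' B, z.2 ^ m ∂μ) :
    ν = μ := by
  have hμsnd := hasMomentsOn_map measurable_snd hK hμK hμ
  have hνsnd := hasMomentsOn_map measurable_snd hK hνK hν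
  refine Measure.ext_prod fun {B : Set ℝ} {A : Set ℝ} hB hA => ?_
  set S : Set (ℝ × ℝ) := Prod.fst ⁻¹' B
  have hS : MeasurableSet S := measurable_fst hB
  have hle {κ : Measure (ℝ × ℝ)} (T : Set (ℝ × ℝ)) :
      (κ.restrict T).map Prod.snd ≤ κ.map Prod.snd :=
    Measure.map_mono Measure.restrict_le_self measurable_snd
  have hdet' : DeterminateOn K ((μ.restrict S).map Prod.snd + (μ.restrict Sᶜ).map Prod.snd) := by
    rwa [← Measure.map_add _ _ measurable_snd, Measure.restrict_add_restrict_compl hS]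
  have hAS : (ν.restrict S).map Prod.snd = (μ.restrict S).map Prod.snd :=
    hdet'.eq_of_add_eq (hνsnd.mono (hle S)) (hμsnd.mono (hle S)).integrable_pow
      (hμsnd.mono (hle Sᶜ)) fun k => by
        rw [integral_map measurable_snd.aemeasurable (by fun_prop),
          integral_map measurable_snd.aemeasurable (by fun_prop)]
        exact hslice k hB
  have := congrArg (· A) hAS
  simpa [Measure.map_apply measurable_snd hA, Measure.restrict_apply (measurable_snd hA), S,
    prod_eq, inter_comm] using this

end Slices

/-- If a finite Borel measure `μ` on `[0,∞) × [0,2π]` (polar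
form) with all moments finite has determinate radial marginal (on `[0,∞)`) and
determinate angular marginal (on the compact set `[0,2π]`), then `μ` is
determinate on `[0,∞) × [0,2π]`. -/
theorem determinate_polar_of_marginals_determinate
    (μ : Measure (ℝ × ℝ)) [IsFiniteMeasure μ]
    (hsupp : μ (Set.Ici (0:ℝ) ×ˢ Set.Icc (0:ℝ) (2 * Real.pi))ᶜ = 0)
    (hmom : ∀ n' m' : ℕ, Integrable (fun z => z.1 ^ n' * z.2 ^ m') μ)
    (hrad : DeterminateOn (Set.Ici 0) (Measure.map Prod.fst μ))
    (hang : DeterminateOn (Set.Icc 0 (2 * Real.pi)) (Measure.map Prod.snd μ)) :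
    ∀ ν : Measure (ℝ × ℝ), IsFiniteMeasure ν →
      ν (Set.Ici (0:ℝ) ×ˢ Set.Icc (0:ℝ) (2 * Real.pi))ᶜ = 0 →
      (∀ n' m' : ℕ, Integrable (fun z => z.1 ^ n' * z.2 ^ m') ν) →
      (∀ n' m' : ℕ,
        ∫ z, z.1 ^ n' * z.2 ^ m' ∂ν = ∫ z, z.1 ^ n' * z.2 ^ m' ∂μ) →
      ν = μ := by
  intro ν _ hνsupp hνmom hνμ
  have hsnd {κ : Measure (ℝ × ℝ)}
      (hκ : κ (Ici (0:ℝ) ×ˢ Icc 0 (2 * Real.pi))ᶜ = 0) :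
      κ (Prod.snd ⁻¹' Icc 0 (2 * Real.pi))ᶜ = 0 :=
    measure_mono_null (compl_subset_compl.2 (prod_subset_preimage_snd _ _)) hκ
  refine eq_of_setIntegral_preimage_fst_eq measurableSet_Icc (hsnd hsupp) (hsnd hνsupp)
    (fun k => by simpa using hmom 0 k) (fun k => by simpa using hνmom 0 k) hang ?_
  exact setIntegral_preimage_fst_eq_of_determinateOn_fst measurableSet_Ici Real.two_pi_pos
    hsupp hνsupp (fun k => by simpa using hmom k 0) (fun k => by simpa using hνmom k 0) hrad hνμ
end
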